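/- arXiv:0802.2481 — 5 statements merged into one kernel-verified Lean document; each statement's English description precedes it below -/
import Mathlib

section
/- The complex vector space of homogeneous polynomials of degree 6 in ℂ[z₀,z₁,z₂] that are invariant both under the substitution d (f(λz₀,λ²z₁,λ⁴z₂) = f) and under the cyclic substitution τ (f(z₂,z₀,z₁) = f) is exactly the two-dimensional linear span of P₁ = z₀²z₁²z₂² and P₂ = z₀⁵z₁ + z₂⁵z₀ + z₁⁵z₂. -/
open MvPolynomial

noncomputable def lam : ℂ := Complex.exp (2 * Real.pi * Complex.I / 7)

/-- The substitution `d : (z₀, z₁, z₂) ↦ (λz₀, λ²z₁, λ⁴z₂)` acting on polynomials. -/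
noncomputable def dSub : MvPolynomial (Fin 3) ℂ →ₐ[ℂ] MvPolynomial (Fin 3) ℂ :=
  aeval ![C lam * X 0, C (lam ^ 2) * X 1, C (lam ^ 4) * X 2]

/-- The cyclic substitution `τ : (z₀, z₁, z₂) ↦ (z₂, z₀, z₁)` acting on polynomials. -/
noncomputable def tauSub : MvPolynomial (Fin 3) ℂ →ₐ[ℂ] MvPolynomial (Fin 3) ℂ :=
  aeval ![X 2, X 0, X 1]

noncomputable def P₁ : MvPolynomial (Fin 3) ℂ := X 0 ^ 2 * X 1 ^ 2 * X 2 ^ 2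

noncomputable def P₂ : MvPolynomial (Fin 3) ℂ :=
  X 0 ^ 5 * X 1 + X 2 ^ 5 * X 0 + X 1 ^ 5 * X 2

/-!
The substitution `d` scales the monomial `z₀^a z₁^b z₂^c` by `λ^(a + 2b + 4c)`, so a `d`-invariant
polynomial only involves exponents with `7 ∣ a + 2b + 4c`. In degree `6` these are `(2,2,2)`,
`(5,1,0)`, `(1,0,5)` and `(0,5,1)`, and `τ` permutes the last three cyclically, so their
coefficients agree. Hence an invariant is determined by two coefficients, and `P₁`, `P₂`
realise them.
-/

section DiagonalAction

variable {σ R : Type*} [CommSemiring R] (w : σ → ℕ) (r : R)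

theorem aeval_C_pow_mul_X_monomial (m : σ →₀ ℕ) (c : R) :
    aeval (fun i => C (r ^ w i) * X i) (monomial m c) =
      C (r ^ Finsupp.weight w m) * monomial m c := by
  rw [aeval_monomial, monomial_eq, Finsupp.weight_apply, algebraMap_eq]
  simp only [mul_pow, Finsupp.prod_mul, ← C_pow, ← pow_mul, ← map_finsuppProd C]
  rw [Finsupp.prod, Finsupp.sum, Finset.prod_pow_eq_pow_sum]
  simp only [smul_eq_mul, mul_comm]
  ring

theorem coeff_aeval_C_pow_mul_X (f : MvPolynomial σ R) (m : σ →₀ ℕ) :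
    coeff m (aeval (fun i => C (r ^ w i) * X i) f) = r ^ Finsupp.weight w m * coeff m f := by
  classical
  induction f using MvPolynomial.induction_on' with
  | monomial m' c =>
    rw [aeval_C_pow_mul_X_monomial, coeff_C_mul, coeff_monomial]
    split_ifs with h <;> simp [h]
  | add p q hp hq => simp only [map_add, coeff_add, hp, hq, mul_add]

theorem dvd_weight_of_aeval_C_pow_mul_X_eq_self [IsDomain R] {ζ : R} {n : ℕ}
    (hζ : IsPrimitiveRoot ζ n) {f : MvPolynomial σ R}
    (hf : aeval (fun i => C (ζ ^ w i) * X i) f = f) {m : σ →₀ ℕ} (hm : m ∈ f.support) :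
    n ∣ Finsupp.weight w m := by
  have hcoeff := coeff_aeval_C_pow_mul_X w ζ f m
  rw [hf] at hcoeff
  refine (hζ.pow_eq_one_iff_dvd _).mp (mul_right_cancel₀ (mem_support_iff.mp hm) ?_)
  rw [← hcoeff, one_mul]

end DiagonalAction

theorem isPrimitiveRoot_lam : IsPrimitiveRoot lam 7 := by
  simpa [lam] using Complex.isPrimitiveRoot_exp 7 (by norm_num)

theorem dSub_eq_aeval : dSub = aeval (fun i => C (lam ^ ![1, 2, 4] i) * X i) := by
  rw [dSub]
  congr 1
  funext i
  fin_cases i <;> simp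

theorem tauSub_eq_rename : tauSub = rename (finRotate 3).symm := by
  refine algHom_ext fun i => ?_
  rw [tauSub, aeval_X, rename_X]
  fin_cases i <;> rfl

noncomputable def exponent (a b c : ℕ) : Fin 3 →₀ ℕ :=
  Finsupp.single 0 a + Finsupp.single 1 b + Finsupp.single 2 c

@[simp] theorem exponent_apply_zero (a b c : ℕ) : exponent a b c 0 = a := by simp [exponent]
@[simp] theorem exponent_apply_one (a b c : ℕ) : exponent a b c 1 = b := by simp [exponent]
@[simp] theorem exponent_apply_two (a b c : ℕ) : exponent a b c 2 = c := by simp [exponent]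

theorem exists_eq_exponent (m : Fin 3 →₀ ℕ) : ∃ a b c, m = exponent a b c :=
  ⟨m 0, m 1, m 2, by ext i; fin_cases i <;> simp⟩

theorem exponent_inj {a b c a' b' c' : ℕ} :
    exponent a b c = exponent a' b' c' ↔ a = a' ∧ b = b' ∧ c = c' := by
  refine ⟨fun h => ⟨?_, ?_, ?_⟩, by rintro ⟨rfl, rfl, rfl⟩; rfl⟩
  · simpa using DFunLike.congr_fun h 0
  · simpa using DFunLike.congr_fun h 1
  · simpa using DFunLike.congr_fun h 2

theorem X_pow_mul_X_pow_mul_X_pow {R : Type*} [CommSemiring R] (a b c : ℕ) :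
    (X 0 ^ a * X 1 ^ b * X 2 ^ c : MvPolynomial (Fin 3) R) = monomial (exponent a b c) 1 := by
  simp [exponent, X_pow_eq_monomial, monomial_mul]

theorem coeff_tauSub_exponent (f : MvPolynomial (Fin 3) ℂ) (a b c : ℕ) :
    coeff (exponent b c a) (tauSub f) = coeff (exponent a b c) f := by
  have : Finsupp.mapDomain (finRotate 3).symm (exponent a b c) = exponent b c a := by
    ext i
    fin_cases i <;> simp [Finsupp.mapDomain_equiv_apply]
  rw [tauSub_eq_rename, ← this]
  exact coeff_rename_mapDomain _ (Equiv.injective _) f _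

theorem exponent_cases_of_degree_eq_six {m : Fin 3 →₀ ℕ} (hdeg : m.degree = 6)
    (hw : 7 ∣ Finsupp.weight ![1, 2, 4] m) :
    m = exponent 2 2 2 ∨ m = exponent 5 1 0 ∨ m = exponent 1 0 5 ∨ m = exponent 0 5 1 := by
  obtain ⟨a, b, c, rfl⟩ := exists_eq_exponent m
  simp only [Finsupp.degree_eq_sum, Finsupp.weight_eq_sum, Fin.sum_univ_three, exponent_apply_zero,
    exponent_apply_one, exponent_apply_two, smul_eq_mul, Matrix.cons_val_zero, Matrix.cons_val_one,
    Matrix.cons_val_two, Matrix.head_cons, Matrix.tail_cons] at hdeg hw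
  simp only [exponent_inj]
  have hb : b ≤ 6 := by omega
  have hc : c ≤ 6 := by omega
  interval_cases b <;> interval_cases c <;> omega

theorem P₁_eq_monomial : P₁ = monomial (exponent 2 2 2) 1 :=
  X_pow_mul_X_pow_mul_X_pow 2 2 2

theorem P₂_eq_sum_monomial :
    P₂ = monomial (exponent 5 1 0) 1 + monomial (exponent 1 0 5) 1 + monomial (exponent 0 5 1) 1 := by
  simp only [← X_pow_mul_X_pow_mul_X_pow, P₂]
  ring

theorem isHomogeneous_P₁ : P₁.IsHomogeneous 6 :=
  ((isHomogeneous_X_pow 0 2).mul (isHomogeneous_X_pow 1 2)).mul (isHomogeneous_X_pow 2 2)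

theorem isHomogeneous_P₂ : P₂.IsHomogeneous 6 :=
  ((((isHomogeneous_X_pow 0 5).mul (isHomogeneous_X _ 1)).add
    ((isHomogeneous_X_pow 2 5).mul (isHomogeneous_X _ 0))).add
    ((isHomogeneous_X_pow 1 5).mul (isHomogeneous_X _ 2)))

theorem C_lam_pow_seven : (C lam : MvPolynomial (Fin 3) ℂ) ^ 7 = 1 := by
  rw [← C_pow, isPrimitiveRoot_lam.pow_eq_one, C_1]

theorem dSub_P₁ : dSub P₁ = P₁ := by
  simp only [P₁, dSub, map_mul, map_pow, aeval_X, Matrix.cons_val_zero, Matrix.cons_val_one,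
    Matrix.cons_val]
  linear_combination (X 0 ^ 2 * X 1 ^ 2 * X 2 ^ 2) * (C lam ^ 7 + 1) * C_lam_pow_seven

-- The three monomials of `P₂` have weights `7`, `21` and `14`.
theorem dSub_P₂ : dSub P₂ = P₂ := by
  simp only [P₂, dSub, map_add, map_mul, map_pow, aeval_X, Matrix.cons_val_zero,
    Matrix.cons_val_one, Matrix.cons_val]
  linear_combination (X 0 ^ 5 * X 1 + X 2 ^ 5 * X 0 * (C lam ^ 14 + C lam ^ 7 + 1)
    + X 1 ^ 5 * X 2 * (C lam ^ 7 + 1)) * C_lam_pow_seven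

theorem tauSub_P₁ : tauSub P₁ = P₁ := by
  simp only [P₁, tauSub, map_mul, map_pow, aeval_X, Matrix.cons_val_zero,
    Matrix.cons_val_one, Matrix.cons_val]
  ring

theorem tauSub_P₂ : tauSub P₂ = P₂ := by
  simp only [P₂, tauSub, map_add, map_mul, map_pow, aeval_X, Matrix.cons_val_zero,
    Matrix.cons_val_one, Matrix.cons_val]
  ring

theorem linearIndependent_P₁_P₂ : LinearIndependent ℂ ![P₁, P₂] := by
  rw [LinearIndependent.pair_iff]
  intro s t hst
  have h₁ := congrArg (coeff (exponent 2 2 2)) hst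
  have h₂ := congrArg (coeff (exponent 5 1 0)) hst
  simp [P₁_eq_monomial, P₂_eq_sum_monomial, coeff_monomial, exponent_inj] at h₁ h₂
  exact ⟨h₁, h₂⟩

theorem finrank_span_P₁_P₂ : Module.finrank ℂ (Submodule.span ℂ {P₁, P₂}) = 2 := by
  rw [← Matrix.range_cons_cons_empty P₁ P₂ ![], finrank_span_eq_card linearIndependent_P₁_P₂]
  simp

theorem eq_smul_P₁_add_smul_P₂ {f : MvPolynomial (Fin 3) ℂ} (hh : f.IsHomogeneous 6)
    (hd : dSub f = f) (ht : tauSub f = f) :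
    f = coeff (exponent 2 2 2) f • P₁ + coeff (exponent 5 1 0) f • P₂ := by
  have hrot (a b c : ℕ) : coeff (exponent b c a) f = coeff (exponent a b c) f := by
    rw [← coeff_tauSub_exponent f a b c, ht]
  ext m
  by_cases hm : m = exponent 2 2 2 ∨ m = exponent 5 1 0 ∨ m = exponent 1 0 5 ∨ m = exponent 0 5 1
  · rcases hm with rfl | rfl | rfl | rfl <;>
      simp [P₁_eq_monomial, P₂_eq_sum_monomial, coeff_monomial, exponent_inj, hrot 5 1 0,
        hrot 1 0 5]
  · have hzero : coeff m f = 0 := by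
      by_contra hne
      exact hm (exponent_cases_of_degree_eq_six (Finsupp.degree_eq_weight_one (R := ℕ) ▸ hh hne)
        (dvd_weight_of_aeval_C_pow_mul_X_eq_self _ isPrimitiveRoot_lam (dSub_eq_aeval ▸ hd)
          (mem_support_iff.mpr hne)))
    simp only [not_or] at hm
    obtain ⟨h₁, h₂, h₃, h₄⟩ := hm
    simp [hzero, P₁_eq_monomial, P₂_eq_sum_monomial, coeff_monomial, Ne.symm h₁, Ne.symm h₂,
      Ne.symm h₃, Ne.symm h₄]

/-- The space of homogeneous polynomials of degree 6 in ℂ[z₀,z₁,z₂] invariant under both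
`d` and `τ` is exactly the two-dimensional span of `P₁ = z₀²z₁²z₂²` and
`P₂ = z₀⁵z₁ + z₂⁵z₀ + z₁⁵z₂`. -/
theorem degree_six_H_invariants :
    {f : MvPolynomial (Fin 3) ℂ | f.IsHomogeneous 6 ∧ dSub f = f ∧ tauSub f = f} =
      (Submodule.span ℂ ({P₁, P₂} : Set (MvPolynomial (Fin 3) ℂ)) :
        Set (MvPolynomial (Fin 3) ℂ)) ∧
    Module.finrank ℂ (Submodule.span ℂ ({P₁, P₂} : Set (MvPolynomial (Fin 3) ℂ))) = 2 := by
  refine ⟨Set.ext fun f => ⟨?_, ?_⟩, finrank_span_P₁_P₂⟩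
  · rintro ⟨hh, hd, ht⟩
    rw [SetLike.mem_coe, eq_smul_P₁_add_smul_P₂ hh hd ht]
    exact Submodule.mem_span_pair.mpr ⟨_, _, rfl⟩
  · intro hf
    obtain ⟨a, b, rfl⟩ := Submodule.mem_span_pair.mp hf
    refine ⟨?_, ?_, ?_⟩
    · exact (homogeneousSubmodule (Fin 3) ℂ 6).add_mem (Submodule.smul_mem _ a isHomogeneous_P₁)
        (Submodule.smul_mem _ b isHomogeneous_P₂)
    · rw [map_add, map_smul, map_smul, dSub_P₁, dSub_P₂]
    · rw [map_add, map_smul, map_smul, tauSub_P₁, tauSub_P₂]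
end

section
/- The polynomial 3·z₀²z₁²z₂² − (z₀⁵z₁ + z₂⁵z₀ + z₁⁵z₂) is irreducible in the polynomial ring ℂ[z₀,z₁,z₂]. -/
/-!
As a quintic in `z₀` over `ℂ[z₁, z₂]` the polynomial reads
`-z₁ z₀⁵ + 3 z₁² z₂² z₀² - z₂⁵ z₀ - z₁⁵ z₂`.
It is Eisenstein at the prime `z₂`: the leading coefficient `-z₁` is prime to `z₂`, every other
coefficient is divisible by `z₂`, and the constant term is not divisible by `z₂²`. It is also
primitive, since its coefficients `-z₁` and `-z₂⁵` have no common non-unit factor.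
-/

open MvPolynomial

theorem Polynomial.isPrimitive_of_isRelPrime_coeff {R : Type*} [CommSemiring R] {f : Polynomial R}
    {m n : ℕ} (h : IsRelPrime (f.coeff m) (f.coeff n)) : f.IsPrimitive := fun r hr ↦
  h ((C_dvd_iff_dvd_coeff r f).1 hr m) ((C_dvd_iff_dvd_coeff r f).1 hr n)

theorem Ideal.mul_mem_span_singleton_sq_iff {R : Type*} [CommRing R] [IsDomain R] {p : R}
    (hp : p ≠ 0) (a : R) : a * p ∈ span {p} ^ 2 ↔ p ∣ a := by
  rw [span_singleton_pow, mem_span_singleton, sq, mul_dvd_mul_iff_right hp]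

namespace MvPolynomial

variable {σ R : Type*} [CommRing R] [IsDomain R]

theorem not_X_dvd_X_pow {i j : σ} (hij : i ≠ j) (n : ℕ) :
    ¬ (X i : MvPolynomial σ R) ∣ X j ^ n :=
  fun h ↦ hij (X_dvd_X.mp (X_prime.dvd_of_dvd_pow h))

theorem isRelPrime_X_X_pow {i j : σ} (hij : i ≠ j) (n : ℕ) :
    IsRelPrime (X i : MvPolynomial σ R) (X j ^ n) :=
  X_prime.irreducible.isRelPrime_iff_not_dvd.2 (not_X_dvd_X_pow hij n)

end MvPolynomial

section

variable (R : Type*) [CommRing R]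

/-- The polynomial as one in `z₀`, with `z₁, z₂` renamed to `X 0, X 1`. -/
noncomputable def fsingInZ₀ : Polynomial (MvPolynomial (Fin 2) R) :=
  Polynomial.C (3 * X 0 ^ 2 * X 1 ^ 2) * Polynomial.X ^ 2 -
    (Polynomial.C (X 0) * Polynomial.X ^ 5 + Polynomial.C (X 1 ^ 5) * Polynomial.X +
      Polynomial.C (X 0 ^ 5 * X 1))

theorem finSuccEquiv_fsing :
    finSuccEquiv R 2
      (3 * (X 0 ^ 2 * X 1 ^ 2 * X 2 ^ 2) - (X 0 ^ 5 * X 1 + X 2 ^ 5 * X 0 + X 1 ^ 5 * X 2)) =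
    fsingInZ₀ R := by
  have h1 : (1 : Fin 3) = (0 : Fin 2).succ := rfl
  have h2 : (2 : Fin 3) = (1 : Fin 2).succ := rfl
  simp only [fsingInZ₀, map_sub, map_add, map_mul, map_pow, map_ofNat, h1, h2,
    finSuccEquiv_X_zero, finSuccEquiv_X_succ]
  ring

theorem coeff_fsingInZ₀ (n : ℕ) : (fsingInZ₀ R).coeff n =
    (if n = 2 then 3 * X 0 ^ 2 * X 1 ^ 2 else 0) -
      ((if n = 5 then X 0 else 0) + (if n = 1 then X 1 ^ 5 else 0) +
        (if n = 0 then X 0 ^ 5 * X 1 else 0)) := by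
  simp only [fsingInZ₀, Polynomial.coeff_sub, Polynomial.coeff_add, Polynomial.coeff_C_mul_X_pow,
    Polynomial.coeff_C_mul_X, Polynomial.coeff_C]

theorem degree_fsingInZ₀ [Nontrivial R] : (fsingInZ₀ R).degree = 5 := by
  unfold fsingInZ₀
  compute_degree!

theorem leadingCoeff_fsingInZ₀ [Nontrivial R] : (fsingInZ₀ R).leadingCoeff = -X 0 := by
  rw [Polynomial.leadingCoeff, Polynomial.natDegree_eq_of_degree_eq_some (degree_fsingInZ₀ R)]
  simp [coeff_fsingInZ₀]

variable [IsDomain R]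

theorem irreducible_fsingInZ₀ : Irreducible (fsingInZ₀ R) := by
  have hX₁ : (X 1 : MvPolynomial (Fin 2) R) ≠ 0 := X_ne_zero 1
  refine Polynomial.irreducible_of_eisenstein_criterion
    ((Ideal.span_singleton_prime hX₁).2 X_prime) ?_ ?_ (by simp [degree_fsingInZ₀]) ?_ ?_
  · simp [leadingCoeff_fsingInZ₀, Ideal.mem_span_singleton]
  · intro n hn
    rw [degree_fsingInZ₀, Nat.cast_lt_ofNat] at hn
    rw [coeff_fsingInZ₀, Ideal.mem_span_singleton]
    interval_cases n <;> simp [Dvd.intro_left, dvd_mul_of_dvd_right]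
  · simpa [coeff_fsingInZ₀, Ideal.mul_mem_span_singleton_sq_iff hX₁]
      using not_X_dvd_X_pow one_ne_zero 5
  · refine Polynomial.isPrimitive_of_isRelPrime_coeff (m := 5) (n := 1) ?_
    simpa [coeff_fsingInZ₀] using (isRelPrime_X_X_pow (R := R) (zero_ne_one' (Fin 2)) 5).neg_neg

end

/-- The polynomial `3·z₀²z₁²z₂² − (z₀⁵z₁ + z₂⁵z₀ + z₁⁵z₂)` is irreducible in ℂ[z₀,z₁,z₂]. -/
theorem Fsing_irreducible :
    Irreducible
      (3 * (X 0 ^ 2 * X 1 ^ 2 * X 2 ^ 2) - (X 0 ^ 5 * X 1 + X 2 ^ 5 * X 0 + X 1 ^ 5 * X 2) :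
        MvPolynomial (Fin 3) ℂ) := by
  rw [← MulEquiv.irreducible_iff (finSuccEquiv ℂ 2), finSuccEquiv_fsing]
  exact irreducible_fsingInZ₀ ℂ
end

section
/- There is no injective group homomorphism from a nonabelian group of order 21 into PGL(2,ℂ) = GL(2,ℂ)/center; equivalently, a nonabelian group of order 21 admits no effective action on ℙ¹(ℂ) by projective transformations. -/
/-- PGL(2,ℂ): the quotient of GL(2,ℂ) by its center. -/
abbrev PGL2C :=
  Matrix.GeneralLinearGroup (Fin 2) ℂ ⧸ Subgroup.center (Matrix.GeneralLinearGroup (Fin 2) ℂ)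

/-! An element of prime order `p` in `PGL(2, K)` (`K` algebraically closed of characteristic
zero) lifts to a matrix with distinct eigenvalues `α, β` whose ratio `r` is a primitive `p`-th
root of unity: equal eigenvalues would make the lift parabolic, and no power of a parabolic
element is scalar. The class function `tr² / det = r + 2 + r⁻¹` then shows that the element is
conjugate to its `k`-th power only if `r ^ k = r ^ (±1)`, i.e. only if it is conjugate to itself
or to its inverse. In a nonabelian group of order 21 an element `b` of order 3 normalizes the
subgroup generated by an element `a` of order 7; since 3 is odd, `b` cannot invert `a`, so a
faithful image in `PGL(2, ℂ)` would force `b` to commute with `a`, making the group cyclic. -/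
namespace Matrix

variable {R : Type*} [CommRing R]

theorem trace_pow_fin_two (A : Matrix (Fin 2) (Fin 2) R) {α β : R}
    (hsum : α + β = A.trace) (hprod : α * β = A.det) (n : ℕ) :
    (A ^ n).trace = α ^ n + β ^ n := by
  have hcayley : A ^ 2 = A.trace • A - A.det • 1 := by
    nontriviality R
    have := A.aeval_self_charpoly
    rw [charpoly_fin_two] at this
    simp only [map_add, map_sub, map_pow, Polynomial.aeval_X, map_mul, Polynomial.aeval_C,
      Algebra.algebraMap_eq_smul_one, smul_mul_assoc, one_mul] at this
    rw [← sub_eq_zero, ← this]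
    abel
  induction n using Nat.strong_induction_on with
  | _ n ih =>
    match n with
    | 0 => norm_num
    | 1 => simpa using hsum.symm
    | n + 2 =>
      have hrec : A ^ (n + 2) = A.trace • A ^ (n + 1) - A.det • A ^ n := by
        rw [pow_add, hcayley, mul_sub, mul_smul_comm, mul_smul_comm, ← pow_succ, mul_one]
      rw [hrec, trace_sub, trace_smul, trace_smul, ih n (by omega), ih (n + 1) (by omega),
        ← hsum, ← hprod, smul_eq_mul, smul_eq_mul]
      ring

theorem discr_pow_fin_two (A : Matrix (Fin 2) (Fin 2) R) {α β : R}
    (hsum : α + β = A.trace) (hprod : α * β = A.det) (n : ℕ) :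
    (A ^ n).discr = (α ^ n - β ^ n) ^ 2 := by
  rw [discr_fin_two, trace_pow_fin_two A hsum hprod, det_pow, ← hprod]
  ring

theorem discr_scalar_fin_two (c : R) : (scalar (Fin 2) c).discr = 0 := by
  rw [discr_fin_two, scalar_apply, trace_diagonal, det_diagonal, Fin.sum_univ_two,
    Fin.prod_univ_two]
  ring

theorem exists_add_eq_trace_and_mul_eq_det {K : Type*} [Field K] [IsAlgClosed K]
    (A : Matrix (Fin 2) (Fin 2) K) : ∃ α β, α + β = A.trace ∧ α * β = A.det := by
  obtain ⟨α, hα⟩ := IsAlgClosed.exists_root A.charpoly (by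
    rw [Polynomial.degree_eq_natDegree A.charpoly_monic.ne_zero, charpoly_natDegree_eq_dim]; simp)
  refine ⟨α, A.trace - α, by ring, ?_⟩
  simp only [Polynomial.IsRoot, charpoly_fin_two, Polynomial.eval_add, Polynomial.eval_sub,
    Polynomial.eval_pow, Polynomial.eval_mul, Polynomial.eval_C, Polynomial.eval_X] at hα
  linear_combination -hα

end Matrix

namespace Matrix.GeneralLinearGroup

open Subgroup

variable {K : Type*} [Field K]

def traceSqDivDet (g : GL (Fin 2) K) : K := g.val.trace ^ 2 / g.val.det

theorem traceSqDivDet_pow {g : GL (Fin 2) K} {α β : K} (hsum : α + β = g.val.trace)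
    (hprod : α * β = g.val.det) (k : ℕ) :
    traceSqDivDet (g ^ k) = (α ^ k + β ^ k) ^ 2 / (α * β) ^ k := by
  rw [traceSqDivDet, Units.val_pow_eq_pow_val, trace_pow_fin_two _ hsum hprod, det_pow, hprod]

theorem traceSqDivDet_conj (g h : GL (Fin 2) K) :
    traceSqDivDet (h * g * h⁻¹) = traceSqDivDet g := by
  simp only [traceSqDivDet, Units.val_mul]
  rw [trace_units_conj, det_units_conj]

theorem traceSqDivDet_mul_of_mem_center (g : GL (Fin 2) K) {z : GL (Fin 2) K}
    (hz : z ∈ center (GL (Fin 2) K)) : traceSqDivDet (g * z) = traceSqDivDet g := by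
  obtain ⟨u, rfl⟩ := (center_eq_range_scalar (n := Fin 2) (R := K)) ▸ hz
  simp only [traceSqDivDet, Units.val_mul, coe_scalar, scalar_apply, ← smul_eq_mul_diagonal,
    trace_smul, det_smul, Fintype.card_fin, smul_eq_mul]
  field_simp

theorem traceSqDivDet_eq_of_mk_eq {g h : GL (Fin 2) K}
    (hgh : (g : GL (Fin 2) K ⧸ center (GL (Fin 2) K)) = h) :
    traceSqDivDet g = traceSqDivDet h := by
  rw [← mul_inv_cancel_left g h, traceSqDivDet_mul_of_mem_center _ (QuotientGroup.eq.mp hgh)]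

theorem discr_ne_zero_of_pow_mem_center [CharZero K] {g : GL (Fin 2) K} {n : ℕ} (hn : n ≠ 0)
    (hg : g ∉ center (GL (Fin 2) K)) (hgn : g ^ n ∈ center (GL (Fin 2) K)) :
    g.val.discr ≠ 0 := by
  rw [mem_center_iff_val_mem_range_scalar] at hg hgn
  exact fun hdiscr ↦ (IsParabolic.pow ⟨hg, hdiscr⟩ hn).1 hgn


variable [IsAlgClosed K] [CharZero K]

theorem exists_orderOf_eq_and_traceSqDivDet_pow_eq {p : ℕ} [Fact p.Prime] {g : GL (Fin 2) K}
    (hg : g ∉ center (GL (Fin 2) K)) (hgp : g ^ p ∈ center (GL (Fin 2) K)) :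
    ∃ r : K, orderOf r = p ∧ ∀ k, traceSqDivDet (g ^ k) = (r ^ k + 1) ^ 2 / r ^ k := by
  obtain ⟨α, β, hsum, hprod⟩ := exists_add_eq_trace_and_mul_eq_det g.val
  have hαβ : α * β ≠ 0 := hprod ▸ g.det_ne_zero
  have hα : α ≠ 0 := left_ne_zero_of_mul hαβ
  have hβ : β ≠ 0 := right_ne_zero_of_mul hαβ
  have hne : α ≠ β := by
    have := discr_ne_zero_of_pow_mem_center (Fact.out : p.Prime).ne_zero hg hgp
    rw [← pow_one g.val, discr_pow_fin_two _ hsum hprod] at this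
    simpa [sub_eq_zero] using this
  have hpow : α ^ p = β ^ p := by
    obtain ⟨u, hu⟩ := (center_eq_range_scalar (n := Fin 2) (R := K)) ▸ hgp
    have := discr_scalar_fin_two (u : K)
    rw [← coe_scalar, hu, Units.val_pow_eq_pow_val, discr_pow_fin_two _ hsum hprod] at this
    exact sub_eq_zero.mp (pow_eq_zero_iff two_ne_zero |>.mp this)
  refine ⟨α / β, orderOf_eq_prime ?_ ?_, fun k ↦ ?_⟩
  · rw [div_pow, hpow, div_self (pow_ne_zero _ hβ)]
  · rwa [Ne, div_eq_one_iff_eq hβ]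
  · rw [traceSqDivDet_pow hsum hprod, div_pow]
    field_simp
    ring

theorem modEq_of_traceSqDivDet_pow_eq {p k : ℕ} [Fact p.Prime] {g : GL (Fin 2) K}
    (hg : g ∉ center (GL (Fin 2) K)) (hgp : g ^ p ∈ center (GL (Fin 2) K))
    (hk : traceSqDivDet (g ^ k) = traceSqDivDet g) : k ≡ 1 [MOD p] ∨ k + 1 ≡ 0 [MOD p] := by
  obtain ⟨r, hr, htr⟩ := exists_orderOf_eq_and_traceSqDivDet_pow_eq hg hgp
  have hfin : IsOfFinOrder r := orderOf_pos_iff.mp (hr ▸ (Fact.out : p.Prime).pos)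
  have hr0 : r ≠ 0 := hfin.isUnit.ne_zero
  have hfactor : (r ^ k - r) * (r ^ (k + 1) - 1) = 0 := by
    rw [htr, ← pow_one g, htr, pow_one] at hk
    field_simp at hk
    linear_combination hk
  rw [← hr, ← hfin.pow_eq_pow_iff_modEq, ← hfin.pow_eq_pow_iff_modEq, pow_one, pow_zero]
  exact (mul_eq_zero.mp hfactor).imp sub_eq_zero.mp sub_eq_zero.mp

theorem conj_eq_or_eq_inv_of_conj_mem_zpowers {p : ℕ} [Fact p.Prime]
    {x y : GL (Fin 2) K ⧸ center (GL (Fin 2) K)} (hx : orderOf x = p)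
    (hxy : y * x * y⁻¹ ∈ zpowers x) : y * x * y⁻¹ = x ∨ y * x * y⁻¹ = x⁻¹ := by
  have hfin : IsOfFinOrder x := orderOf_pos_iff.mp (hx ▸ (Fact.out : p.Prime).pos)
  obtain ⟨k, hk⟩ := hfin.mem_powers_iff_mem_zpowers.mpr hxy
  rw [← hk]
  induction x using QuotientGroup.induction_on with | H g => ?_
  induction y using QuotientGroup.induction_on with | H h => ?_
  have hg : g ∉ center (GL (Fin 2) K) := by
    rw [← QuotientGroup.eq_one_iff]
    intro h1
    rw [h1, orderOf_one] at hx
    exact (Fact.out : p.Prime).ne_one hx.symm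
  have hgp : g ^ p ∈ center (GL (Fin 2) K) := by
    rw [← QuotientGroup.eq_one_iff, QuotientGroup.mk_pow, ← hx, pow_orderOf_eq_one]
  have htr : traceSqDivDet (g ^ k) = traceSqDivDet g := by
    rw [traceSqDivDet_eq_of_mk_eq (h := h * g * h⁻¹) (by simpa using hk), traceSqDivDet_conj]
  have := modEq_of_traceSqDivDet_pow_eq hg hgp htr
  rwa [← hx, ← hfin.pow_eq_pow_iff_modEq, ← hfin.pow_eq_pow_iff_modEq, pow_one, pow_zero,
    pow_succ, mul_eq_one_iff_eq_inv] at this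

end Matrix.GeneralLinearGroup

theorem Subgroup.normal_zpowers_of_orderOf_mul_minFac {G : Type*} [Group G] [Finite G] {a : G}
    (h : orderOf a * (Nat.card G).minFac = Nat.card G) : (zpowers a).Normal := by
  refine normal_of_index_eq_minFac_card (Nat.eq_of_mul_eq_mul_left (orderOf_pos a) ?_)
  rw [h, ← Nat.card_zpowers, card_mul_index]

theorem sq_eq_one_of_conj_eq_inv {G : Type*} [Group G] {a b : G} {n : ℕ} (hn : Odd n)
    (hb : b ^ n = 1) (h : b * a * b⁻¹ = a⁻¹) : a ^ 2 = 1 := by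
  obtain ⟨m, rfl⟩ := hn
  have hsq : Commute (b ^ 2) a := by
    refine mul_inv_eq_iff_eq_mul.mp ?_
    calc b ^ 2 * a * (b ^ 2)⁻¹ = b * (b * a * b⁻¹) * b⁻¹ := by rw [sq]; group
      _ = (b * a * b⁻¹)⁻¹ := by nth_rw 1 [h]; group
      _ = a := by rw [h, inv_inv]
  have hb' : b = ((b ^ 2) ^ m)⁻¹ := by
    rw [eq_inv_iff_mul_eq_one, ← pow_mul, ← pow_succ', hb]
  have hba : b * a * b⁻¹ = a := by
    rw [hb']
    exact mul_inv_eq_iff_eq_mul.mpr (hsq.pow_left m).inv_left.eq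
  rw [sq, mul_eq_one_iff_eq_inv, ← h, hba]

open Subgroup Matrix.GeneralLinearGroup in
/-- A nonabelian group of order 21 admits no effective action on ℙ¹(ℂ) by projective
transformations: there is no injective group homomorphism into PGL(2,ℂ). -/
theorem no_faithful_PGL2_rep (H : Type*) [Group H] (hcard : Nat.card H = 21)
    (hna : ¬∀ a b : H, a * b = b * a) :
    ¬∃ φ : H →* PGL2C, Function.Injective φ := by
  rintro ⟨φ, hφ⟩
  have : Finite H := Nat.finite_of_card_ne_zero (by omega)
  have : Fact (Nat.Prime 7) := ⟨by norm_num⟩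
  have : Fact (Nat.Prime 3) := ⟨by norm_num⟩
  obtain ⟨a, ha⟩ := exists_prime_orderOf_dvd_card' (G := H) 7 (by rw [hcard]; norm_num)
  obtain ⟨b, hb⟩ := exists_prime_orderOf_dvd_card' (G := H) 3 (by rw [hcard]; norm_num)
  have hnormal : (zpowers a).Normal :=
    normal_zpowers_of_orderOf_mul_minFac (by rw [ha, hcard]; norm_num)
  have hconj : b * a * b⁻¹ = a ∨ b * a * b⁻¹ = a⁻¹ := by
    have hmem : φ (b * a * b⁻¹) ∈ zpowers (φ a) :=
      φ.map_zpowers a ▸ mem_map_of_mem φ (hnormal.conj_mem a (mem_zpowers a) b)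
    rw [map_mul, map_mul, map_inv] at hmem
    have := conj_eq_or_eq_inv_of_conj_mem_zpowers (orderOf_injective φ hφ a ▸ ha) hmem
    simpa only [← map_mul, ← map_inv, hφ.eq_iff] using this
  have hb3 : b ^ 3 = 1 := hb ▸ pow_orderOf_eq_one b
  have hcomm : Commute a b := by
    refine (mul_inv_eq_iff_eq_mul.mp (hconj.resolve_right fun h ↦ ?_)).symm
    have h72 : 7 ∣ 2 :=
      ha ▸ orderOf_dvd_of_pow_eq_one (sq_eq_one_of_conj_eq_inv (by decide) hb3 h)
    norm_num at h72
  have : IsCyclic H := isCyclic_of_orderOf_eq_card (a * b) (by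
    rw [hcomm.orderOf_mul_eq_mul_orderOf_of_coprime (by rw [ha, hb]; norm_num), ha, hb, hcard])
  exact hna IsMulCommutative.is_comm.comm
end

section
/- Let H be a nonabelian group of order 21 and let φ : H → PGL(3,ℂ) be an injective group homomorphism, where PGL(3,ℂ) = GL(3,ℂ)/center. Then φ lifts to the special linear group: there exists an injective group homomorphism ψ : H → SL(3,ℂ) such that the composition of ψ with the natural projection SL(3,ℂ) → PGL(3,ℂ) equals φ. -/
/-- PGL(3,ℂ): the quotient of GL(3,ℂ) by its center. -/
abbrev PGL3C :=
  Matrix.GeneralLinearGroup (Fin 3) ℂ ⧸ Subgroup.center (Matrix.GeneralLinearGroup (Fin 3) ℂ)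

/-- The natural projection SL(3,ℂ) → PGL(3,ℂ). -/
noncomputable def SLtoPGL3 : Matrix.SpecialLinearGroup (Fin 3) ℂ →* PGL3C :=
  (QuotientGroup.mk' (Subgroup.center (Matrix.GeneralLinearGroup (Fin 3) ℂ))).comp
    Matrix.SpecialLinearGroup.toGL

/-!
Write `H = ⟨a, b⟩` with `a⁷ = b³ = 1` and `b⁻¹ a b = a²`. The kernel of `SL(3,ℂ) → PGL(3,ℂ)`
is the centre, of exponent 3, so `φ a` has a lift `A` with `A⁷ = 1`, and such a lift is unique;
for any lift `X` of `φ b` this uniqueness forces `X⁻¹ A X = A²`. If `v` is an eigenvector of `A`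
for an eigenvalue `μ ≠ 1`, then `v, Xv, X²v` are eigenvectors for the distinct eigenvalues
`μ, μ², μ⁴`, and in this basis `X` permutes cyclically up to the scalar `X³ = u`; hence
`u = det X = 1`. So `⟨A, X⟩` has at most 21 elements while mapping onto `φ(H)`, which has 21:
the projection is an isomorphism on it, and its inverse composed with `φ` is the lift.
-/

section CentralKernel

variable {G M : Type*} [Group G] [Group M] {π : G →* M} {m n : ℕ}

theorem MonoidHom.exists_map_eq_and_pow_eq_one (hker : ∀ z ∈ π.ker, z ^ m = 1)
    (hmn : m.Coprime n) {g : G} (hg : π g ^ n = 1) : ∃ g', π g' = π g ∧ g' ^ n = 1 := by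
  obtain ⟨s, t, hst⟩ := Nat.isCoprime_iff_coprime.mpr hmn
  have hgn : g ^ n ∈ π.ker := by rw [MonoidHom.mem_ker, map_pow, hg]
  refine ⟨g ^ (s * m), ?_, ?_⟩
  · calc π (g ^ (s * m)) = π g ^ (s * m + t * n) := by
          rw [map_zpow, zpow_add, mul_comm t, zpow_mul (π g) n t, zpow_natCast, hg, one_zpow,
            mul_one]
      _ = π g := by rw [hst, zpow_one]
  · rw [← zpow_natCast, ← zpow_mul, show s * m * n = n * m * s by ring, zpow_mul, zpow_mul,
      zpow_natCast, zpow_natCast, hker _ hgn, one_zpow]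

theorem MonoidHom.eq_of_map_eq_of_pow_eq_one (hcen : π.ker ≤ Subgroup.center G)
    (hker : ∀ z ∈ π.ker, z ^ m = 1) (hmn : m.Coprime n) {g g' : G} (h : π g = π g')
    (hg : g ^ n = 1) (hg' : g' ^ n = 1) : g = g' := by
  have hz : g * g'⁻¹ ∈ π.ker := by rw [MonoidHom.mem_ker, map_mul, map_inv, h, mul_inv_cancel]
  have hzn : (g * g'⁻¹) ^ n = 1 := by
    have hcomm : Commute (g * g'⁻¹) g' := (Subgroup.mem_center_iff.mp (hcen hz) g').symm
    simpa [hg, hg', eq_comm] using hcomm.mul_pow n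
  have := pow_gcd_eq_one.mpr ⟨hker _ hz, hzn⟩
  rwa [Nat.Coprime.gcd_eq_one hmn, pow_one, mul_inv_eq_one] at this

end CentralKernel

section Subgroups

variable {G : Type*} [Group G]

theorem Subgroup.zpowers_le_normalizer_of_conj_mem {a g : G} [Finite (zpowers a)]
    (h : g⁻¹ * a * g ∈ zpowers a) : zpowers g ≤ normalizer (zpowers a : Set G) := by
  rw [zpowers_le, ← inv_mem_iff]
  refine mem_normalizer_fintype fun x hx => ?_
  obtain ⟨k, rfl⟩ := mem_zpowers_iff.mp hx
  have := map_zpow (MulAut.conj g⁻¹) a k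
  simp only [MulAut.conj_apply, inv_inv] at this
  rw [inv_inv, this]
  exact zpow_mem h k

theorem Subgroup.finite_and_card_zpowers_sup_le {g a : G} {m n : ℕ} (hm : 0 < m) (hg : g ^ m = 1)
    (hn : 0 < n) (ha : a ^ n = 1) (hga : g⁻¹ * a * g ∈ zpowers a) :
    Finite ↥(zpowers g ⊔ zpowers a) ∧ Nat.card ↥(zpowers g ⊔ zpowers a) ≤ m * n := by
  have hgfin := (isOfFinOrder_iff_pow_eq_one.mpr ⟨m, hm, hg⟩).finite_zpowers
  have hafin := (isOfFinOrder_iff_pow_eq_one.mpr ⟨n, hn, ha⟩).finite_zpowers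
  have : Finite (zpowers a) := hafin.to_subtype
  have hmul := coe_mul_of_left_le_normalizer_right _ _ (zpowers_le_normalizer_of_conj_mem hga)
  refine ⟨Set.Finite.to_subtype (hmul ▸ hgfin.mul hafin), ?_⟩
  calc Nat.card ↥(zpowers g ⊔ zpowers a)
      ≤ Nat.card (zpowers g) * Nat.card (zpowers a) :=
        (congrArg (fun s : Set G => Nat.card s) hmul).trans_le Set.natCard_mul_le
    _ ≤ m * n := by
        rw [Nat.card_zpowers, Nat.card_zpowers]
        exact Nat.mul_le_mul (orderOf_le_of_pow_eq_one hm hg) (orderOf_le_of_pow_eq_one hn ha)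

theorem Subgroup.zpowers_sup_zpowers_eq_top_of_coprime [Finite G] {a b : G}
    (hab : (orderOf a).Coprime (orderOf b)) (hcard : Nat.card G = orderOf a * orderOf b) :
    zpowers a ⊔ zpowers b = ⊤ := by
  refine eq_top_of_card_eq _ (Nat.dvd_antisymm (card_subgroup_dvd_card _) ?_)
  rw [hcard]
  refine hab.mul_dvd_of_dvd_of_dvd ?_ ?_
  · exact Nat.card_zpowers a ▸ card_dvd_of_le le_sup_left
  · exact Nat.card_zpowers b ▸ card_dvd_of_le le_sup_right

end Subgroups

theorem MonoidHom.exists_injective_lift_of_map_eq_range {H G M : Type*} [Group H] [Group G]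
    [Group M] {π : G →* M} {φ : H →* M} (hφ : Function.Injective φ) {K : Subgroup G} [Finite K]
    (hK : K.map π = φ.range) (hcard : Nat.card K ≤ Nat.card H) :
    ∃ ψ : H →* G, Function.Injective ψ ∧ π.comp ψ = φ := by
  let f : K →* φ.range := (π.comp K.subtype).codRestrict _ fun k => hK ▸ ⟨k, k.2, rfl⟩
  have hf : Function.Surjective f := by
    rintro ⟨_, hy⟩
    obtain ⟨g, hg, rfl⟩ := hK ▸ hy
    exact ⟨⟨g, hg⟩, rfl⟩
  have hcard' : Nat.card K = Nat.card φ.range :=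
    le_antisymm (hcard.trans_eq (Nat.card_range_of_injective hφ).symm)
      (Nat.card_le_card_of_surjective f hf)
  let e := MulEquiv.ofBijective f ((Nat.bijective_iff_surjective_and_card f).mpr ⟨hf, hcard'⟩)
  let ι := MonoidHom.ofInjective hφ
  refine ⟨K.subtype.comp (e.symm.toMonoidHom.comp ι.toMonoidHom), ?_, ?_⟩
  · exact Subtype.val_injective.comp (e.symm.injective.comp ι.injective)
  · ext h
    exact congrArg Subtype.val (e.apply_symm_apply (ι h))

theorem inv_pow_mul_mul_pow_eq_pow_pow {G : Type*} [Group G] {a b : G} {r : ℕ}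
    (hr : b⁻¹ * a * b = a ^ r) (j : ℕ) : (b ^ j)⁻¹ * a * b ^ j = a ^ (r ^ j) := by
  induction j with
  | zero => simp
  | succ j ih =>
    calc (b ^ (j + 1))⁻¹ * a * b ^ (j + 1) = b⁻¹ * ((b ^ j)⁻¹ * a * b ^ j) * b := by group
      _ = (b⁻¹ * a * b) ^ (r ^ j) := by simpa [ih] using (conj_pow (a := b⁻¹) (b := a)).symm
      _ = a ^ (r ^ (j + 1)) := by rw [hr, ← pow_mul, pow_succ']

open Subgroup in
theorem exists_orderOf_eq_seven_and_conj_eq_sq {H : Type*} [Group H] (hcard : Nat.card H = 21)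
    (hna : ¬∀ a b : H, a * b = b * a) :
    ∃ a b : H, orderOf a = 7 ∧ orderOf b = 3 ∧ b⁻¹ * a * b = a ^ 2 := by
  have : Finite H := Nat.finite_of_card_ne_zero (by omega)
  have : Fact (Nat.Prime 7) := ⟨by norm_num⟩
  obtain ⟨a, ha⟩ := exists_prime_orderOf_dvd_card' (G := H) 7 (by rw [hcard]; norm_num)
  obtain ⟨b, hb⟩ := exists_prime_orderOf_dvd_card' (G := H) 3 (by rw [hcard]; norm_num)
  have hb3 : b ^ 3 = 1 := hb ▸ pow_orderOf_eq_one b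
  have hnormal : (zpowers a).Normal := by
    refine normal_of_index_eq_minFac_card ?_
    have := (zpowers a).index_mul_card
    rw [Nat.card_zpowers, ha, hcard] at this
    rw [hcard, show Nat.minFac 21 = 3 by norm_num]
    omega
  obtain ⟨r, hr7, hr⟩ : ∃ r < 7, b⁻¹ * a * b = a ^ r := by
    obtain ⟨k, hk⟩ := (Submonoid.mem_powers_iff _ _).mp
      (mem_powers_iff_mem_zpowers.mpr (hnormal.conj_mem' a (mem_zpowers a) b))
    exact ⟨k % 7, Nat.mod_lt _ (by norm_num), by rw [← hk, ← ha, pow_mod_orderOf]⟩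
  have hconj := inv_pow_mul_mul_pow_eq_pow_pow hr
  have hr3 : r ^ 3 % 7 = 1 := by
    have := hconj 3
    rw [hb3, inv_one, one_mul, mul_one, ← pow_one a, ← pow_mul, one_mul] at this
    have := pow_eq_pow_iff_modEq.mp this.symm
    rwa [ha] at this
  have hr1 : r ≠ 1 := by
    rintro rfl
    rw [pow_one, mul_assoc, inv_mul_eq_iff_eq_mul] at hr
    have h21 : orderOf (a * b) = Nat.card H := by
      rw [Commute.orderOf_mul_eq_mul_orderOf_of_coprime hr (by rw [ha, hb]; norm_num), ha, hb,
        hcard]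
    have := isCyclic_of_orderOf_eq_card _ h21
    exact hna (IsCyclic.commGroup).mul_comm
  have hcube : ∀ r < 7, r ^ 3 % 7 = 1 → r ≠ 1 → r = 2 ∨ r = 4 := by decide
  obtain rfl | rfl := hcube r hr7 hr3 hr1
  · exact ⟨a, b, ha, hb, hr⟩
  · refine ⟨a, b⁻¹, ha, by rw [orderOf_inv, hb], ?_⟩
    have hb2 : b ^ 2 = b⁻¹ := eq_inv_of_mul_eq_one_left (by rw [← pow_succ, hb3])
    have h := hconj 2
    rw [hb2, inv_inv, ← pow_mod_orderOf, ha] at h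
    rw [inv_inv, h]
    norm_num

section LinearAlgebra

open Module End

variable {K V : Type*} [Field K] [AddCommGroup V] [Module K V]

theorem Module.End.exists_hasEigenvector_ne_one [IsAlgClosed K] [FiniteDimensional K V]
    {f : End K V} {n : ℕ} (hn : (n : K) ≠ 0) (hfn : f ^ n = 1) (hf : f ≠ 1) :
    ∃ μ v, f.HasEigenvector μ v ∧ μ ≠ 1 := by
  have hW : ∀ w ∈ LinearMap.range (f - 1), f w ∈ LinearMap.range (f - 1) := by
    rintro _ ⟨y, rfl⟩
    exact ⟨f y, by simp⟩
  have : Nontrivial (LinearMap.range (f - 1)) :=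
    Submodule.nontrivial_iff_ne_bot.mpr (LinearMap.range_eq_bot.not.mpr (sub_ne_zero.mpr hf))
  obtain ⟨μ, hμ⟩ := exists_eigenvalue (f.restrict hW)
  obtain ⟨⟨_, y, rfl⟩, hw⟩ := hμ.exists_hasEigenvector
  have hv : f.HasEigenvector μ ((f - 1) y) :=
    ⟨mem_eigenspace_iff.mpr (congrArg Subtype.val hw.apply_eq_smul),
      fun h => hw.2 (Subtype.ext h)⟩
  refine ⟨μ, _, hv, ?_⟩
  rintro rfl
  -- `1 + f + ⋯ + f ^ (n - 1)` kills the range of `f - 1` but is `n` on the fixed vectors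
  have := congrArg (· y) (geom_sum_mul f n)
  simp only [mul_apply, LinearMap.coe_sum, Finset.sum_apply, hv.pow_apply, one_pow, one_smul,
    Finset.sum_const, Finset.card_range, hfn, sub_self, LinearMap.zero_apply] at this
  rw [← Nat.cast_smul_eq_nsmul K, smul_eq_zero] at this
  exact this.elim hn hv.2

theorem LinearMap.det_eq_of_apply_basis_cycle (b : Basis (Fin 3) K V) {g : V →ₗ[K] V} {u : K}
    (h0 : g (b 0) = b 1) (h1 : g (b 1) = b 2) (h2 : g (b 2) = u • b 0) :
    LinearMap.det g = u := by
  rw [← LinearMap.det_toMatrix b, Matrix.det_fin_three]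
  simp [LinearMap.toMatrix_apply, h0, h1, h2]

theorem Module.End.HasEigenvector.apply_of_mul_eq_mul_sq {f g : End K V} (hfg : f * g = g * f ^ 2)
    (hg : Function.Injective g) {μ : K} {v : V} (hv : f.HasEigenvector μ v) :
    f.HasEigenvector (μ ^ 2) (g v) := by
  refine ⟨mem_eigenspace_iff.mpr ?_, (map_ne_zero_iff g hg).mpr hv.2⟩
  rw [← mul_apply, hfg, mul_apply, hv.pow_apply, map_smul]

theorem Module.End.det_eq_of_mul_eq_mul_sq (hV : finrank K V = 3) {f g : End K V}
    (hfg : f * g = g * f ^ 2) (hg : Function.Injective g) {μ : K} (hμ : IsPrimitiveRoot μ 7)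
    {v : V} (hv : f.HasEigenvector μ v) {u : K} (hg3 : (g ^ 3) v = u • v) :
    LinearMap.det g = u := by
  have hev (i : ℕ) : f.HasEigenvector (μ ^ 2 ^ i) ((g ^ i) v) := by
    induction i with
    | zero => simpa using hv
    | succ i ih =>
      have := ih.apply_of_mul_eq_mul_sq hfg hg
      rwa [← pow_mul, ← pow_succ, ← mul_apply, ← pow_succ'] at this
  have hinj : Function.Injective fun i : Fin 3 => μ ^ 2 ^ (i : ℕ) := by
    intro i j hij
    have := hμ.pow_inj (by fin_cases i <;> norm_num) (by fin_cases j <;> norm_num) hij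
    exact Fin.ext (Nat.pow_right_injective le_rfl this)
  have hli := eigenvectors_linearIndependent' f _ hinj _ fun i : Fin 3 => hev i
  let b := basisOfLinearIndependentOfCardEqFinrank hli (by simp [hV])
  have hb (i : Fin 3) : b i = (g ^ (i : ℕ)) v := by simp [b]
  refine LinearMap.det_eq_of_apply_basis_cycle b ?_ ?_ ?_ <;>
    simp only [hb, ← mul_apply, ← pow_succ'] <;> simp [hg3]

end LinearAlgebra

theorem Matrix.SpecialLinearGroup.pow_card_eq_one_of_mem_center {n R : Type*} [Fintype n]
    [DecidableEq n] [CommRing R] {A : SpecialLinearGroup n R}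
    (hA : A ∈ Subgroup.center (SpecialLinearGroup n R)) : A ^ Fintype.card n = 1 := by
  obtain ⟨r, hr, hrA⟩ := mem_center_iff.mp hA
  ext : 1
  rw [coe_pow, ← hrA, ← map_pow, hr, map_one, coe_one]

open Matrix in
theorem Matrix.SpecialLinearGroup.pow_three_eq_one_of_conj_eq_sq {K : Type*} [Field K]
    [IsAlgClosed K] [CharZero K] {A X : SpecialLinearGroup (Fin 3) K} (hA7 : A ^ 7 = 1)
    (hA1 : A ≠ 1) (hAX : X⁻¹ * A * X = A ^ 2)
    (hX3 : X ^ 3 ∈ Subgroup.center (SpecialLinearGroup (Fin 3) K)) : X ^ 3 = 1 := by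
  obtain ⟨r, -, hr⟩ := mem_center_iff.mp hX3
  let ρ : SpecialLinearGroup (Fin 3) K →* Module.End K (Fin 3 → K) :=
    (MonoidHomClass.toMonoidHom Matrix.toLinAlgEquiv').comp coeMonoidHom
  have hρ : Function.Injective ρ := Matrix.toLinAlgEquiv'.injective.comp coeMonoidHom_injective
  have hfg : ρ A * ρ X = ρ X * ρ A ^ 2 := by
    rw [mul_assoc, inv_mul_eq_iff_eq_mul] at hAX
    rw [← map_pow, ← map_mul, ← map_mul, hAX]
  have hf7 : ρ A ^ 7 = 1 := by rw [← map_pow, hA7, map_one]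
  obtain ⟨μ, v, hv, hμ1⟩ := Module.End.exists_hasEigenvector_ne_one (n := 7) (by norm_num) hf7
    (hρ.ne_iff' (map_one ρ) |>.mpr hA1)
  have hμ : IsPrimitiveRoot μ 7 := by
    have : Fact (Nat.Prime 7) := ⟨by norm_num⟩
    refine IsPrimitiveRoot.iff_orderOf.mpr (orderOf_eq_prime ?_ hμ1)
    have := hv.pow_apply 7
    rw [hf7, Module.End.one_apply] at this
    exact smul_left_injective K hv.2 (this.symm.trans (one_smul K v).symm)
  have hg : Function.Injective (ρ X) :=
    (Module.End.isUnit_iff _).mp ((Group.isUnit X).map ρ) |>.injective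
  have hdet := Module.End.det_eq_of_mul_eq_mul_sq (by simp) hfg hg hμ hv (u := r)
    (by rw [← map_pow]; simp [ρ, ← hr])
  rw [show LinearMap.det (ρ X) = 1 from LinearMap.det_toLin' _ |>.trans X.2] at hdet
  rw [← hdet] at hr
  ext : 1
  rw [← hr, map_one, coe_one]

theorem SLtoPGL3_ker :
    SLtoPGL3.ker = Subgroup.center (Matrix.SpecialLinearGroup (Fin 3) ℂ) :=
  Matrix.SpecialLinearGroup.toPGL_ker

theorem SLtoPGL3_surjective : Function.Surjective SLtoPGL3 := by
  refine (Matrix.ProjectiveSpecialLinearGroup.toPGL_surj_of_roots fun r => ?_).comp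
    QuotientGroup.mk_surjective
  obtain ⟨k, hk⟩ := IsAlgClosed.exists_pow_nat_eq (r : ℂ) (n := 3) (by norm_num)
  refine ⟨Units.mk0 k fun hk0 => r.ne_zero ?_, Units.ext ?_⟩
  · rw [← hk, hk0, zero_pow three_ne_zero]
  · simpa using hk

theorem pow_three_eq_one_of_mem_ker_SLtoPGL3 {z : Matrix.SpecialLinearGroup (Fin 3) ℂ}
    (hz : z ∈ SLtoPGL3.ker) : z ^ 3 = 1 :=
  Matrix.SpecialLinearGroup.pow_card_eq_one_of_mem_center (SLtoPGL3_ker ▸ hz)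

theorem exists_SLtoPGL3_eq_and_pow_eq_one {n : ℕ} (hn : Nat.Coprime 3 n) {p : PGL3C}
    (hp : p ^ n = 1) : ∃ A, SLtoPGL3 A = p ∧ A ^ n = 1 := by
  obtain ⟨A₀, rfl⟩ := SLtoPGL3_surjective p
  exact SLtoPGL3.exists_map_eq_and_pow_eq_one (fun _ => pow_three_eq_one_of_mem_ker_SLtoPGL3) hn hp

theorem eq_of_SLtoPGL3_eq_of_pow_eq_one {n : ℕ} (hn : Nat.Coprime 3 n)
    {A B : Matrix.SpecialLinearGroup (Fin 3) ℂ} (h : SLtoPGL3 A = SLtoPGL3 B) (hA : A ^ n = 1)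
    (hB : B ^ n = 1) : A = B :=
  SLtoPGL3.eq_of_map_eq_of_pow_eq_one SLtoPGL3_ker.le
    (fun _ => pow_three_eq_one_of_mem_ker_SLtoPGL3) hn h hA hB

/-- Every injective homomorphism of a nonabelian group of order 21 into PGL(3,ℂ) lifts to
an injective homomorphism into SL(3,ℂ). -/
theorem PGL3_rep_lifts_to_SL3 (H : Type*) [Group H] (hcard : Nat.card H = 21)
    (hna : ¬∀ a b : H, a * b = b * a) (φ : H →* PGL3C) (hφ : Function.Injective φ) :
    ∃ ψ : H →* Matrix.SpecialLinearGroup (Fin 3) ℂ,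
      Function.Injective ψ ∧ SLtoPGL3.comp ψ = φ := by
  have : Finite H := Nat.finite_of_card_ne_zero (by rw [hcard]; norm_num)
  obtain ⟨a, b, ha, hb, hab⟩ := exists_orderOf_eq_seven_and_conj_eq_sq hcard hna
  have hb3 : b ^ 3 = 1 := hb ▸ pow_orderOf_eq_one b
  obtain ⟨A, hA, hA7⟩ := exists_SLtoPGL3_eq_and_pow_eq_one (n := 7) (p := φ a) (by norm_num)
    (by rw [← map_pow, ← ha, pow_orderOf_eq_one, map_one])
  obtain ⟨X, hX⟩ := SLtoPGL3_surjective (φ b)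
  have hAX : X⁻¹ * A * X = A ^ 2 := eq_of_SLtoPGL3_eq_of_pow_eq_one (n := 7) (by norm_num)
    (by rw [map_mul, map_mul, map_inv, hA, hX, ← map_inv, ← map_mul, ← map_mul, hab, map_pow,
      map_pow, hA])
    (by simpa [hA7] using (map_pow (MulAut.conj X⁻¹) A 7).symm)
    (by rw [← pow_mul, mul_comm, pow_mul, hA7, one_pow])
  have hA1 : A ≠ 1 := fun h => by
    rw [h, map_one, eq_comm, map_eq_one_iff φ hφ] at hA
    simp [hA] at ha
  have hX3 : X ^ 3 = 1 := Matrix.SpecialLinearGroup.pow_three_eq_one_of_conj_eq_sq hA7 hA1 hAX <|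
    SLtoPGL3_ker ▸ by rw [MonoidHom.mem_ker, map_pow, hX, ← map_pow, hb3, map_one]
  obtain ⟨hKfin, hKcard⟩ := Subgroup.finite_and_card_zpowers_sup_le (by norm_num) hX3
    (by norm_num) hA7 (hAX ▸ pow_mem (Subgroup.mem_zpowers A) 2)
  refine SLtoPGL3.exists_injective_lift_of_map_eq_range hφ ?_ (hKcard.trans_eq hcard.symm)
  rw [Subgroup.map_sup, MonoidHom.map_zpowers, MonoidHom.map_zpowers, hX, hA,
    ← MonoidHom.map_zpowers, ← MonoidHom.map_zpowers, ← Subgroup.map_sup, sup_comm,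
    Subgroup.zpowers_sup_zpowers_eq_top_of_coprime (by rw [ha, hb]; norm_num)
      (by rw [ha, hb, hcard]), ← MonoidHom.range_eq_map]
end

section
/- Any two subgroups of order 21 of PSL(2,𝔽₇) are conjugate in PSL(2,𝔽₇). -/
/-!
A subgroup `K` of order 21 of `PSL(2,𝔽₇)` has index 8, prime to 7, so it contains a Sylow
7-subgroup `P`. The number of Sylow 7-subgroups of `K` divides 3 and is `≡ 1 mod 7`, so `P` is
normal in `K` and `K ≤ N(P)`. As `PSL(2,𝔽₇)` is simple, it has more than one, hence exactly 8,
Sylow 7-subgroups, so `|N(P)| = 168 / 8 = 21` and `K = N(P)`. Any two Sylow 7-subgroups are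
conjugate, and so are their normalizers.
-/

/-- PSL(2,𝔽₇): the quotient of SL(2,ℤ/7ℤ) by its center. -/
abbrev PSL2F7 :=
  Matrix.SpecialLinearGroup (Fin 2) (ZMod 7) ⧸
    Subgroup.center (Matrix.SpecialLinearGroup (Fin 2) (ZMod 7))

open Subgroup Matrix

instance fact_prime_seven : Fact (Nat.Prime 7) := ⟨by norm_num⟩

theorem Matrix.SpecialLinearGroup.card_mul_card_units {n R : Type*} [Fintype n] [DecidableEq n]
    [Nonempty n] [CommRing R] :
    Nat.card (SpecialLinearGroup n R) * Nat.card Rˣ = Nat.card (GL n R) := by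
  have card_eq_card_ker :
      Nat.card (SpecialLinearGroup n R) = Nat.card (GeneralLinearGroup.det : GL n R →* Rˣ).ker :=
    (Nat.card_congr (Equiv.ofInjective _ SpecialLinearGroup.toGL_injective)).trans
      (by rw [SpecialLinearGroup.range_toGL]; rfl)
  rw [card_eq_card_ker, ← card_top (G := Rˣ),
    ← MonoidHom.range_eq_top.mpr (GeneralLinearGroup.det_surjective (n := n)), ← index_ker,
    card_mul_index]

theorem Matrix.SpecialLinearGroup.card_center_fin_two {F : Type*} [Field F]
    (hF : ringChar F ≠ 2) : Nat.card (center (SpecialLinearGroup (Fin 2) F)) = 2 := by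
  rw [Nat.card_congr SpecialLinearGroup.center_equiv_rootsOfUnity.toEquiv]
  exact (IsPrimitiveRoot.neg_one (ringChar F) hF).card_rootsOfUnity

theorem Nat.Prime.factorization_mul_of_not_dvd {p m : ℕ} (hp : p.Prime) (hm : ¬ p ∣ m) :
    (p * m).factorization p = 1 := by
  rw [Nat.factorization_mul hp.ne_zero (by rintro rfl; exact hm (dvd_zero p)),
    Finsupp.add_apply, hp.factorization_self, Nat.factorization_eq_zero_of_not_dvd hm]

namespace Sylow

variable {G : Type*} [Group G] {p : ℕ}

theorem le_normalizer_of_le {K : Subgroup G} [Subsingleton (Sylow p K)] (P : Sylow p G)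
    (hPK : (P : Subgroup G) ≤ K) : K ≤ normalizer (P : Set G) :=
  have : ((P : Subgroup G).subgroupOf K).Normal := (P.subtype hPK).normal_of_subsingleton
  le_normalizer_of_normal_subgroupOf hPK

variable [Finite G] [Fact p.Prime]

theorem index_eq_of_card_eq_prime_mul {m : ℕ} (hG : Nat.card G = p * m) (hm : ¬ p ∣ m)
    (P : Sylow p G) : P.index = m := by
  have hP : Nat.card P = p := by
    rw [P.card_eq_multiplicity, hG, (Fact.out : p.Prime).factorization_mul_of_not_dvd hm, pow_one]
  have := card_mul_index (P : Subgroup G)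
  rw [hP, hG] at this
  exact Nat.eq_of_mul_eq_mul_left (Fact.out : p.Prime).pos this

theorem exists_le_of_not_dvd_index {K : Subgroup G} (hK : ¬ p ∣ K.index) :
    ∃ P : Sylow p G, (P : Subgroup G) ≤ K := by
  obtain ⟨Q⟩ := Sylow.nonempty (p := p) (G := K)
  have hcard : Nat.card (Q.map K.subtype) = p ^ (Nat.card G).factorization p := by
    rw [card_map_of_injective K.subtype_injective, Q.card_eq_multiplicity, ← card_mul_index K,
      Nat.factorization_mul Nat.card_pos.ne' index_ne_zero_of_finite, Finsupp.add_apply,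
      Nat.factorization_eq_zero_of_not_dvd hK, add_zero]
  exact ⟨ofCard _ hcard, by rw [coe_ofCard]; exact map_subtype_le _⟩

theorem subsingleton_of_index_lt (P : Sylow p G) (hP : P.index < p) :
    Subsingleton (Sylow p G) := by
  have hlt : Nat.card (Sylow p G) < p :=
    (Nat.le_of_dvd (Nat.pos_of_ne_zero index_ne_zero_of_finite) P.card_dvd_index).trans_lt hP
  have hmod := card_sylow_modEq_one p G
  rw [Nat.ModEq, Nat.mod_eq_of_lt hlt, Nat.mod_eq_of_lt (Fact.out : p.Prime).one_lt] at hmod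
  exact (Nat.card_eq_one_iff_unique.mp hmod).1

theorem card_ne_one_of_isSimpleGroup [IsSimpleGroup G] (P : Sylow p G) (hp : p ∣ Nat.card G)
    (htop : (P : Subgroup G) ≠ ⊤) : Nat.card (Sylow p G) ≠ 1 := by
  intro h
  have := (Nat.card_eq_one_iff_unique.mp h).1
  exact P.normal_of_subsingleton.eq_bot_or_eq_top.elim (P.ne_bot_of_dvd_card hp) htop

theorem eq_normalizer_of_le {K : Subgroup G} [Subsingleton (Sylow p K)] (P : Sylow p G)
    (hPK : (P : Subgroup G) ≤ K) (hK : Nat.card K * Nat.card (Sylow p G) = Nat.card G) :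
    K = normalizer (P : Set G) := by
  refine eq_of_le_of_card_ge (P.le_normalizer_of_le hPK) (le_of_eq ?_)
  have hN := card_mul_index (normalizer (P : Set G))
  rw [← P.card_eq_index_normalizer, ← hK] at hN
  exact Nat.eq_of_mul_eq_mul_right Nat.card_pos hN

end Sylow

namespace PSL2F7

theorem card_eq : Nat.card PSL2F7 = 168 := by
  have hGL : Nat.card (GL (Fin 2) (ZMod 7)) = 2016 := by
    rw [card_GL_field]; simp [Fin.prod_univ_two]
  have hunits : Nat.card (ZMod 7)ˣ = 6 := by rw [Nat.card_units, Nat.card_zmod]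
  have hcenter := SpecialLinearGroup.card_center_fin_two (F := ZMod 7)
    (by rw [ZMod.ringChar_zmod_n]; norm_num)
  have hSL := SpecialLinearGroup.card_mul_card_units (n := Fin 2) (R := ZMod 7)
  have := card_eq_card_quotient_mul_card_subgroup (center (SpecialLinearGroup (Fin 2) (ZMod 7)))
  rw [hunits, hGL] at hSL
  rw [hcenter] at this
  show Nat.card (_ ⧸ _) = 168
  omega

instance isSimpleGroup : IsSimpleGroup PSL2F7 :=
  ProjectiveSpecialLinearGroup.rank_two_simple (by simp)

theorem card_sylow_seven : Nat.card (Sylow 7 PSL2F7) = 8 := by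
  obtain ⟨P⟩ := Sylow.nonempty (p := 7) (G := PSL2F7)
  have hidx : P.index = 24 := P.index_eq_of_card_eq_prime_mul (by rw [card_eq]) (by norm_num)
  have hdvd : Nat.card (Sylow 7 PSL2F7) ∣ 24 := hidx ▸ P.card_dvd_index
  have hmod := card_sylow_modEq_one 7 PSL2F7
  have hne : Nat.card (Sylow 7 PSL2F7) ≠ 1 :=
    P.card_ne_one_of_isSimpleGroup (by rw [card_eq]; norm_num)
      (by rw [Ne, ← index_eq_one, hidx]; norm_num)
  have hdivisors : ∀ n ∈ Nat.divisors 24, n % 7 = 1 → n = 1 ∨ n = 8 := by decide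
  exact (hdivisors _ (Nat.mem_divisors.mpr ⟨hdvd, by norm_num⟩) hmod).resolve_left hne

theorem exists_eq_normalizer_sylow {K : Subgroup PSL2F7} (hK : Nat.card K = 21) :
    ∃ P : Sylow 7 PSL2F7, K = normalizer (P : Set PSL2F7) := by
  have hidx : K.index = 8 := by
    have := card_mul_index K
    rw [hK, card_eq] at this
    omega
  obtain ⟨P, hPK⟩ := Sylow.exists_le_of_not_dvd_index (p := 7) (K := K) (by rw [hidx]; norm_num)
  have : Subsingleton (Sylow 7 K) := (P.subtype hPK).subsingleton_of_index_lt <| by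
    rw [(P.subtype hPK).index_eq_of_card_eq_prime_mul (m := 3) hK (by norm_num)]; norm_num
  exact ⟨P, P.eq_normalizer_of_le hPK (by rw [hK, card_sylow_seven, card_eq])⟩

end PSL2F7

/-- Any two subgroups of order 21 of PSL(2,𝔽₇) are conjugate. -/
theorem subgroups_of_order_21_conjugate (K₁ K₂ : Subgroup PSL2F7)
    (h₁ : Nat.card K₁ = 21) (h₂ : Nat.card K₂ = 21) :
    ∃ g : PSL2F7, Subgroup.map (MulAut.conj g).toMonoidHom K₁ = K₂ := by
  obtain ⟨P₁, rfl⟩ := PSL2F7.exists_eq_normalizer_sylow h₁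
  obtain ⟨P₂, rfl⟩ := PSL2F7.exists_eq_normalizer_sylow h₂
  obtain ⟨g, rfl⟩ := MulAction.exists_smul_eq PSL2F7 P₁ P₂
  exact ⟨g, map_normalizer_eq_of_bijective _ (MulAut.conj g).bijective⟩
end
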